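/- arXiv:1712.08887 — 2 statements merged into one kernel-verified Lean document; each statement's English description precedes it below -/
import Mathlib

section
/- If -1 < φ < 0, the row sums s_t of Q^{-1} satisfy 2/(c+2) - 1/(c₁+φ) < s_t < 1/(c₁+φ), where c₁ = (1+γ)/|φ| and c = c₁ + |φ|. -/
/-!
`Q` is strictly diagonally dominant, with margins `c₁ - 1` in the two boundary rows and `c - 2` in
the interior ones. Hence it is invertible, and a maximum principle holds: at an index where `|u|`
is largest the diagonal term dominates, so `|u k| ≤ B` as soon as `|(Q u) k| ≤ B · margin k` for
every row. Apply this to `u = s - 1/(c+2)`: since the interior row sums of `Q` are `c + 2`,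
`Q u` vanishes in the interior and equals `(c + 1 - c₁)/(c + 2)` in the boundary rows, so
`|s_t - 1/(c+2)| ≤ |c + 1 - c₁| / ((c₁ - 1)(c + 2))`. With `c - c₁ = |φ|` and
`c₁ = (1 + γ)/|φ| > 2 + φ` the right-hand side is below `1/(c₁ + φ) - 1/(c + 2)`.
-/

open Matrix

/-- The tridiagonal matrix `Q` with diagonal `(c₁, c, …, c, c₁)` and
off-diagonal entries `-b`. -/
noncomputable def triQ (n : ℕ) (c₁ c b : ℝ) : Matrix (Fin n) (Fin n) ℝ :=
  Matrix.of fun i j =>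
    if i = j then (if i.val = 0 ∨ i.val = n - 1 then c₁ else c)
    else if i.val + 1 = j.val ∨ j.val + 1 = i.val then -b else 0

open Finset

namespace Matrix
variable {ι K : Type*} [Fintype ι] [DecidableEq ι] [NormedDivisionRing K]

def diagDominance (A : Matrix ι ι K) (k : ι) : ℝ :=
  ‖A k k‖ - ∑ j ∈ univ.erase k, ‖A k j‖

theorem norm_le_of_norm_mulVec_le_mul_diagDominance {A : Matrix ι ι K}
    (hA : ∀ k, 0 < A.diagDominance k) {u : ι → K} {B : ℝ}
    (hu : ∀ k, ‖(A *ᵥ u) k‖ ≤ B * A.diagDominance k) (k : ι) :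
    ‖u k‖ ≤ B := by
  have : Nonempty ι := ⟨k⟩
  obtain ⟨T, hT⟩ := Finite.exists_max fun i => ‖u i‖
  have hdiag : A T T * u T = (A *ᵥ u) T - ∑ j ∈ univ.erase T, A T j * u j := by
    rw [mulVec, dotProduct, ← add_sum_erase _ _ (mem_univ T), add_sub_cancel_right]
  have hmax : A.diagDominance T * ‖u T‖ ≤ A.diagDominance T * B := by
    have hoff : ‖∑ j ∈ univ.erase T, A T j * u j‖ ≤ (∑ j ∈ univ.erase T, ‖A T j‖) * ‖u T‖ := by
      rw [sum_mul]
      refine (norm_sum_le _ _).trans (sum_le_sum fun j _ => ?_)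
      rw [norm_mul]
      exact mul_le_mul_of_nonneg_left (hT j) (norm_nonneg _)
    have htri := norm_sub_le ((A *ᵥ u) T) (∑ j ∈ univ.erase T, A T j * u j)
    rw [← hdiag, norm_mul] at htri
    have hres := hu T
    simp only [diagDominance] at hres ⊢
    linarith
  exact (hT k).trans (le_of_mul_le_mul_left hmax (hA T))
end Matrix

lemma sum_range_ite_add_one_eq {M : Type*} [AddCommMonoid M] (x : M) (t n : ℕ) :
    ∑ m ∈ range n, (if m + 1 = t then x else 0) = if 0 < t ∧ t ≤ n then x else 0 := by
  cases t with
  | zero => simp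
  | succ k => simp

section triQ
variable {n : ℕ} (c₁ c b : ℝ)

lemma triQ_apply_self (t : Fin n) :
    triQ n c₁ c b t t = if t.val = 0 ∨ t.val = n - 1 then c₁ else c := by
  simp [triQ]

lemma sum_erase_triQ_apply (hn : 2 ≤ n) (f : ℝ → ℝ) (hf : f 0 = 0) (t : Fin n) :
    ∑ j ∈ univ.erase t, f (triQ n c₁ c b t j) =
      (if t.val = 0 ∨ t.val = n - 1 then 1 else 2) * f (-b) := by
  have hsplit : ∀ j ∈ univ.erase t, f (triQ n c₁ c b t j) =
      (if t.val + 1 = j.val then f (-b) else 0) + (if j.val + 1 = t.val then f (-b) else 0) := by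
    intro j hj
    have hne : t ≠ j := (ne_of_mem_erase hj).symm
    simp only [triQ, of_apply, if_neg hne]
    split_ifs <;> first | omega | simp [hf]
  rw [sum_congr rfl hsplit, sum_add_distrib, sum_erase _ (by simp), sum_erase _ (by simp),
    Fin.sum_univ_eq_sum_range (fun m => if t.val + 1 = m then f (-b) else 0),
    Fin.sum_univ_eq_sum_range (fun m => if m + 1 = t.val then f (-b) else 0),
    sum_ite_eq, sum_range_ite_add_one_eq]
  have ht := t.isLt
  simp only [mem_range]
  split_ifs <;> first | omega | ring

lemma triQ_mulVec_const (hn : 2 ≤ n) (x : ℝ) (t : Fin n) :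
    (triQ n c₁ c b *ᵥ fun _ => x) t =
      (if t.val = 0 ∨ t.val = n - 1 then c₁ - b else c - 2 * b) * x := by
  rw [mulVec, dotProduct, ← sum_mul, ← add_sum_erase _ _ (mem_univ t),
    sum_erase_triQ_apply c₁ c b hn (fun y => y) rfl, triQ_apply_self]
  split_ifs <;> ring

lemma triQ_diagDominance (hn : 2 ≤ n) (t : Fin n) :
    (triQ n c₁ c b).diagDominance t =
      if t.val = 0 ∨ t.val = n - 1 then |c₁| - |b| else |c| - 2 * |b| := by
  rw [diagDominance, triQ_apply_self, sum_erase_triQ_apply c₁ c b hn (‖·‖) norm_zero]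
  split_ifs <;> simp

end triQ

theorem abs_sum_inv_triQ_sub_le {n : ℕ} (hn : 2 ≤ n) {c₁ c : ℝ} (h₁ : 1 < c₁) (h : 2 < c)
    (t : Fin n) :
    |∑ j, (triQ n c₁ c (-1))⁻¹ t j - 1 / (c + 2)| ≤ |c + 1 - c₁| / ((c₁ - 1) * (c + 2)) := by
  set Q := triQ n c₁ c (-1)
  have hdom : ∀ k, 0 < Q.diagDominance k := by
    intro k
    rw [triQ_diagDominance c₁ c (-1) hn, abs_neg, abs_one, abs_of_pos (by linarith),
      abs_of_pos (by linarith)]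
    split_ifs <;> linarith
  have hdet : IsUnit Q.det :=
    isUnit_iff_ne_zero.mpr (det_ne_zero_of_sum_row_lt_diag fun k => sub_pos.mp (hdom k))
  have hrow : ∑ j, Q⁻¹ t j = (Q⁻¹ *ᵥ fun _ => 1) t := by simp [mulVec, dotProduct]
  have hQu : Q *ᵥ ((Q⁻¹ *ᵥ fun _ => 1) - fun _ => 1 / (c + 2)) =
      (fun _ => 1) - Q *ᵥ fun _ => 1 / (c + 2) := by
    rw [mulVec_sub, mulVec_mulVec, mul_nonsing_inv Q hdet, one_mulVec]
  rw [hrow, ← Real.norm_eq_abs]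
  refine norm_le_of_norm_mulVec_le_mul_diagDominance
    (u := (Q⁻¹ *ᵥ fun _ => 1) - fun _ => 1 / (c + 2)) hdom (fun k => ?_) t
  rw [hQu, Pi.sub_apply, triQ_mulVec_const c₁ c (-1) hn, triQ_diagDominance c₁ c (-1) hn,
    abs_neg, abs_one, abs_of_pos (by linarith : 0 < c₁), abs_of_pos (by linarith : 0 < c),
    Real.norm_eq_abs]
  have hc₁ : 0 < c₁ - 1 := by linarith
  have hc : 0 < c + 2 := by linarith
  split_ifs
  · rw [show 1 - (c₁ - -1) * (1 / (c + 2)) = (c + 1 - c₁) / (c + 2) by field_simp; ring,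
      abs_div, abs_of_pos hc]
    exact le_of_eq (by field_simp)
  · rw [show 1 - (c - 2 * -1) * (1 / (c + 2)) = 0 by field_simp; ring, abs_zero]
    exact mul_nonneg (by positivity) (by linarith)

/-- if `-1 < φ < 0`, the row sums `s_t` of `Q⁻¹` satisfy
`2/(c+2) - 1/(c₁+φ) < s_t < 1/(c₁+φ)`, where `c₁ = (1+γ)/|φ|`, `c = c₁ + |φ|`
and the off-diagonal entries of `Q` are `+1` (i.e. `-b` with `b = -1`). -/
theorem stmt_9 (n : ℕ) (hn : 2 ≤ n) (φ γ : ℝ) (hφ : -1 < φ) (hφ0 : φ < 0) (hγ : 0 < γ)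
    (c₁ c : ℝ) (hc₁ : c₁ = (1 + γ) / |φ|) (hc : c = c₁ + |φ|) :
    ∀ t : Fin n,
      2 / (c + 2) - 1 / (c₁ + φ) < ∑ j, (triQ n c₁ c (-1))⁻¹ t j ∧
      ∑ j, (triQ n c₁ c (-1))⁻¹ t j < 1 / (c₁ + φ) := by
  rw [abs_of_neg hφ0] at hc₁ hc
  have hc₁φ : 2 + φ < c₁ := by
    rw [hc₁, lt_div_iff₀ (by linarith)]
    nlinarith [sq_nonneg (1 + φ)]
  have h1φ : 0 < 1 - φ := by linarith
  have hc₁1 : 0 < c₁ - 1 := by linarith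
  have hc₁φ0 : 0 < c₁ + φ := by linarith
  have hc2 : 0 < c + 2 := by linarith
  have hgap : |c + 1 - c₁| / ((c₁ - 1) * (c + 2)) < 1 / (c₁ + φ) - 1 / (c + 2) := by
    rw [show c + 1 - c₁ = 1 - φ by rw [hc]; ring, abs_of_pos h1φ,
      div_sub_div _ _ hc₁φ0.ne' hc2.ne', div_lt_div_iff₀ (by positivity) (by positivity)]
    have hc₁2φ : 0 < c₁ - 2 - φ := by linarith
    rw [hc] at hc2 ⊢
    nlinarith [mul_pos (mul_pos h1φ hc2) hc₁2φ]
  intro t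
  have hbound := abs_lt.mp ((abs_sum_inv_triQ_sub_le hn (by linarith) (by linarith) t).trans_lt
    hgap)
  have htwo : 2 / (c + 2) = 2 * (1 / (c + 2)) := by ring
  constructor <;> linarith [hbound.1, hbound.2]
end

section
/- Writing w^opt = (γ Λ^{-1} + I)^{-1} 1 as a function of γ > 0 (for fixed 0 < φ < 1), each entry of w^opt is strictly decreasing in γ: ∂w^opt/∂γ = -(γΛ^{-1} + I)^{-1} Λ^{-1} (γΛ^{-1}+I)^{-1} 1 has all entries strictly negative. -/
open Matrix

/-- The AR(1) precision tridiagonal matrix. -/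
noncomputable def ar1Lambda (n : ℕ) (φ : ℝ) : Matrix (Fin n) (Fin n) ℝ :=
  Matrix.of fun i j =>
    if i = j then (if i.val = 0 ∨ i.val = n - 1 then (1 : ℝ) else 1 + φ ^ 2)
    else if i.val + 1 = j.val ∨ j.val + 1 = i.val then -φ else 0

/-!
`Λ` has nonpositive off-diagonal entries and positive row sums, and so has `A s = s • 1 + Λ`
for `s ≥ 0`. Looking at a minimal entry of `x` shows that `A s *ᵥ x > 0` forces `x > 0`, so
`(A s)⁻¹` maps positive vectors to positive vectors. Since `(s • Λ⁻¹ + 1)⁻¹ = (A s)⁻¹ * Λ`, we get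
`w s = (A s)⁻¹ *ᵥ (Λ *ᵥ 1) > 0`, the derivative equals `-((A γ)⁻¹ *ᵥ w γ) < 0`, and the resolvent
identity `(A γ₁)⁻¹ - (A γ₂)⁻¹ = (γ₂ - γ₁) • (A γ₁)⁻¹ * (A γ₂)⁻¹` gives strict monotonicity.
-/

open Finset

namespace Matrix

variable {ι : Type*} [Fintype ι]

-- With nonpositive off-diagonal entries, positive row sums amount to strict diagonal dominance.
structure IsDiagDominantZMatrix (A : Matrix ι ι ℝ) : Prop where
  offDiag_nonpos : ∀ i j, i ≠ j → A i j ≤ 0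
  rowSum_pos : ∀ i, 0 < ∑ j, A i j

namespace IsDiagDominantZMatrix

variable {A : Matrix ι ι ℝ} (hA : IsDiagDominantZMatrix A)
include hA

lemma mulVec_apply_le_of_isMin {x : ι → ℝ} {m : ι} (hm : ∀ j, x m ≤ x j) :
    (A *ᵥ x) m ≤ (∑ j, A m j) * x m := by
  rw [mulVec, dotProduct, sum_mul]
  refine sum_le_sum fun j _ => ?_
  rcases eq_or_ne m j with rfl | hj
  · rfl
  · exact mul_le_mul_of_nonpos_left (hm j) (hA.offDiag_nonpos m j hj)

lemma pos_of_mulVec_pos {x : ι → ℝ} (hx : ∀ i, 0 < (A *ᵥ x) i) (i : ι) : 0 < x i := by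
  obtain ⟨m, -, hm⟩ := exists_min_image univ x ⟨i, mem_univ i⟩
  have hxm : 0 < x m := by
    by_contra! hxm
    have := hA.mulVec_apply_le_of_isMin fun j => hm j (mem_univ j)
    nlinarith [hA.rowSum_pos m, hx m]
  exact hxm.trans_le (hm i (mem_univ i))

lemma nonneg_of_mulVec_nonneg {x : ι → ℝ} (hx : ∀ i, 0 ≤ (A *ᵥ x) i) (i : ι) : 0 ≤ x i := by
  obtain ⟨m, -, hm⟩ := exists_min_image univ x ⟨i, mem_univ i⟩
  have hxm : 0 ≤ x m := by
    by_contra! hxm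
    have := hA.mulVec_apply_le_of_isMin fun j => hm j (mem_univ j)
    nlinarith [hA.rowSum_pos m, hx m]
  exact hxm.trans (hm i (mem_univ i))

variable [DecidableEq ι]

lemma isUnit : IsUnit A := by
  rw [← mulVec_injective_iff_isUnit]
  intro x y hxy
  have hz : ∀ i, (A *ᵥ (x - y)) i = 0 := by simp [mulVec_sub, hxy]
  have hz' : ∀ i, (A *ᵥ (y - x)) i = 0 := by simp [mulVec_sub, hxy]
  funext i
  have := hA.nonneg_of_mulVec_nonneg (fun i => (hz i).ge) i
  have := hA.nonneg_of_mulVec_nonneg (fun i => (hz' i).ge) i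
  simp only [Pi.sub_apply] at *
  linarith

lemma isUnit_det : IsUnit A.det := (isUnit_iff_isUnit_det A).mp hA.isUnit

lemma inv_mulVec_pos {y : ι → ℝ} (hy : ∀ i, 0 < y i) (i : ι) : 0 < (A⁻¹ *ᵥ y) i :=
  hA.pos_of_mulVec_pos (by simpa [mulVec_mulVec, mul_nonsing_inv _ hA.isUnit_det] using hy) i

lemma smul_one_add {s : ℝ} (hs : 0 ≤ s) : IsDiagDominantZMatrix (s • 1 + A) where
  offDiag_nonpos i j hij := by simpa [one_apply_ne hij] using hA.offDiag_nonpos i j hij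
  rowSum_pos i := by
    simp only [add_apply, smul_apply, one_apply, smul_eq_mul, mul_ite, mul_one, mul_zero,
      sum_add_distrib, sum_ite_eq, mem_univ, if_true]
    linarith [hA.rowSum_pos i]

lemma inv_smul_one_add_mulVec_lt {s₁ s₂ : ℝ} (hs₁ : 0 ≤ s₁) (hs : s₁ < s₂) {y : ι → ℝ}
    (hy : ∀ i, 0 < y i) (i : ι) : ((s₂ • 1 + A)⁻¹ *ᵥ y) i < ((s₁ • 1 + A)⁻¹ *ᵥ y) i := by
  have h₁ := hA.smul_one_add hs₁
  have h₂ := hA.smul_one_add (hs₁.trans hs.le)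
  have hdiff : (s₁ • 1 + A)⁻¹ - (s₂ • 1 + A)⁻¹ =
      (s₂ - s₁) • ((s₁ • 1 + A)⁻¹ * (s₂ • 1 + A)⁻¹) := by
    rw [inv_sub_inv (iff_of_true h₁.isUnit h₂.isUnit), add_sub_add_right_eq_sub, ← sub_smul,
      Matrix.mul_smul, Matrix.mul_one, Matrix.smul_mul]
  have := congrFun (congrArg (· *ᵥ y) hdiff) i
  simp only [sub_mulVec, smul_mulVec, ← mulVec_mulVec, Pi.sub_apply, Pi.smul_apply,
    smul_eq_mul] at this
  nlinarith [h₁.inv_mulVec_pos (h₂.inv_mulVec_pos hy) i]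

end IsDiagDominantZMatrix

variable [DecidableEq ι]

lemma smul_inv_add_one_eq {α : Type*} [CommRing α] {A : Matrix ι ι α}
    (hA : IsUnit A.det) (s : α) : s • A⁻¹ + 1 = A⁻¹ * (s • 1 + A) := by
  rw [Matrix.mul_add, Matrix.mul_smul, Matrix.mul_one, nonsing_inv_mul _ hA]

lemma inv_smul_inv_add_one {α : Type*} [CommRing α] {A : Matrix ι ι α}
    (hA : IsUnit A.det) (s : α) : (s • A⁻¹ + 1)⁻¹ = (s • 1 + A)⁻¹ * A := by
  rw [smul_inv_add_one_eq hA, mul_inv_rev, nonsing_inv_nonsing_inv _ hA]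

lemma hasDerivAt_inv_smul_add_mulVec (B C : Matrix ι ι ℝ) (v : ι → ℝ) {γ : ℝ}
    (h : IsUnit (γ • B + C)) :
    HasDerivAt (fun s => (s • B + C)⁻¹ *ᵥ v) (-((γ • B + C)⁻¹ * B * (γ • B + C)⁻¹) *ᵥ v) γ := by
  -- `Matrix` carries no global norm; any one will do since the statement only involves vectors.
  let _ : NormedRing (Matrix ι ι ℝ) := Matrix.linftyOpNormedRing
  let _ : NormedAlgebra ℝ (Matrix ι ι ℝ) := Matrix.linftyOpNormedAlgebra
  have _ : CompleteSpace (Matrix ι ι ℝ) := FiniteDimensional.complete ℝ _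
  have hline : HasDerivAt (fun s : ℝ => s • B + C) B γ := by
    have := ((hasDerivAt_id γ).smul_const B).add_const C
    rwa [one_smul] at this
  have hinv := (hasFDerivAt_ringInverse (𝕜 := ℝ) h.unit).comp_hasDerivAt_of_eq γ hline
    h.unit_spec
  let evalAt : Matrix ι ι ℝ →L[ℝ] ι → ℝ :=
    LinearMap.toContinuousLinearMap ((mulVecBilin ℝ ℝ).flip v)
  simp only [Function.comp_def, _root_.neg_apply,
    ContinuousLinearMap.mulLeftRight_apply, coe_units_inv, h.unit_spec,
    ← nonsing_inv_eq_ringInverse] at hinv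
  exact evalAt.hasFDerivAt.comp_hasDerivAt γ hinv

end Matrix

lemma Fin.sum_ite_val_eq {M : Type*} [AddCommMonoid M] (n c : ℕ) (a : M) :
    ∑ j : Fin n, (if (j : ℕ) = c then a else 0) = if c < n then a else 0 := by
  rw [Fin.sum_univ_eq_sum_range (fun j => if j = c then a else 0), sum_ite_eq']
  simp only [mem_range]

section AR1

variable {n : ℕ} {φ : ℝ}

lemma ar1Lambda_apply_nonpos_of_ne (hφ : 0 ≤ φ) {i j : Fin n} (hij : i ≠ j) :
    ar1Lambda n φ i j ≤ 0 := by
  simp only [ar1Lambda, of_apply, if_neg hij]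
  split_ifs <;> linarith

lemma sum_ar1Lambda_row (i : Fin n) :
    ∑ j, ar1Lambda n φ i j =
      (if (i : ℕ) = 0 ∨ (i : ℕ) = n - 1 then 1 else 1 + φ ^ 2)
        - (if 0 < (i : ℕ) then φ else 0) - (if (i : ℕ) + 1 < n then φ else 0) := by
  have hentry : ∀ j : Fin n, ar1Lambda n φ i j =
      (if (i : ℕ) = 0 ∨ (i : ℕ) = n - 1 then 1 else 1 + φ ^ 2) * (if (j : ℕ) = i then 1 else 0)
        - (if 0 < (i : ℕ) then φ else 0) * (if (j : ℕ) = i - 1 then 1 else 0)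
        - φ * (if (j : ℕ) = i + 1 then 1 else 0) := by
    intro j
    simp only [ar1Lambda, of_apply, Fin.ext_iff]
    split_ifs <;> first | ring1 | omega
  simp only [hentry, sum_sub_distrib, ← mul_sum, Fin.sum_ite_val_eq, if_pos i.isLt,
    if_pos (show (i : ℕ) - 1 < n by omega)]
  split_ifs <;> ring

lemma isDiagDominantZMatrix_ar1Lambda (hφ0 : 0 ≤ φ) (hφ1 : φ < 1) :
    (ar1Lambda n φ).IsDiagDominantZMatrix where
  offDiag_nonpos _ _ := ar1Lambda_apply_nonpos_of_ne hφ0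
  rowSum_pos i := by
    rw [sum_ar1Lambda_row]
    split_ifs <;> first | omega | nlinarith

end AR1

theorem stmt_13_general (n : ℕ) (φ : ℝ) (hφ0 : 0 < φ) (hφ1 : φ < 1)
    (Λ : Matrix (Fin n) (Fin n) ℝ) (hΛ : Λ = ar1Lambda n φ)
    (w : ℝ → Fin n → ℝ)
    (hw : ∀ γ : ℝ, w γ = (γ • Λ⁻¹ + 1)⁻¹ *ᵥ (1 : Fin n → ℝ)) :
    (∀ t : Fin n, ∀ γ₁ γ₂ : ℝ, 0 < γ₁ → γ₁ < γ₂ → w γ₂ t < w γ₁ t) ∧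
    (∀ γ : ℝ, 0 < γ → ∀ t : Fin n,
      HasDerivAt (fun s => w s t)
        ((-((γ • Λ⁻¹ + 1)⁻¹ * Λ⁻¹ * (γ • Λ⁻¹ + 1)⁻¹) *ᵥ (1 : Fin n → ℝ)) t) γ ∧
      (-((γ • Λ⁻¹ + 1)⁻¹ * Λ⁻¹ * (γ • Λ⁻¹ + 1)⁻¹) *ᵥ (1 : Fin n → ℝ)) t < 0) := by
  have hZ : Λ.IsDiagDominantZMatrix := hΛ ▸ isDiagDominantZMatrix_ar1Lambda hφ0.le hφ1
  have hres (s : ℝ) : (s • Λ⁻¹ + 1)⁻¹ = (s • 1 + Λ)⁻¹ * Λ := inv_smul_inv_add_one hZ.isUnit_det s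
  have hrow : ∀ i, 0 < (Λ *ᵥ 1) i := by simpa [mulVec, dotProduct] using hZ.rowSum_pos
  have hw' (s : ℝ) : w s = (s • 1 + Λ)⁻¹ *ᵥ (Λ *ᵥ 1) := by rw [hw, hres, mulVec_mulVec]
  refine ⟨fun t γ₁ γ₂ hγ₁ hγ => ?_, fun γ hγ t => ⟨?_, ?_⟩⟩
  · rw [hw', hw']
    exact hZ.inv_smul_one_add_mulVec_lt hγ₁.le hγ hrow t
  · have hX : IsUnit (γ • Λ⁻¹ + 1) := by
      rw [smul_inv_add_one_eq hZ.isUnit_det]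
      exact (isUnit_nonsing_inv_iff.mpr hZ.isUnit).mul (hZ.smul_one_add hγ.le).isUnit
    simp_rw [hw]
    exact hasDerivAt_pi.1 (hasDerivAt_inv_smul_add_mulVec _ _ _ hX) t
  · have hA := hZ.smul_one_add hγ.le
    rw [hres, Matrix.mul_assoc, Matrix.mul_assoc, mul_nonsing_inv_cancel_left _ _ hZ.isUnit_det,
      neg_mulVec, ← mulVec_mulVec, ← mulVec_mulVec, Pi.neg_apply, neg_neg_iff_pos]
    exact hA.inv_mulVec_pos (hA.inv_mulVec_pos hrow) t

/-- writing `w^opt(γ) = (γΛ⁻¹ + I)⁻¹ 1` for fixed `0 < φ < 1`,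
each entry of `w^opt` is strictly decreasing in `γ > 0`; indeed the derivative
`∂w^opt/∂γ = -(γΛ⁻¹+I)⁻¹ Λ⁻¹ (γΛ⁻¹+I)⁻¹ 1` has all entries strictly negative. -/
theorem stmt_13 (n : ℕ) (hn : 2 ≤ n) (φ : ℝ) (hφ0 : 0 < φ) (hφ1 : φ < 1)
    (Λ : Matrix (Fin n) (Fin n) ℝ) (hΛ : Λ = ar1Lambda n φ)
    (w : ℝ → Fin n → ℝ)
    (hw : ∀ γ : ℝ, w γ = (γ • Λ⁻¹ + 1)⁻¹ *ᵥ (1 : Fin n → ℝ)) :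
    (∀ t : Fin n, ∀ γ₁ γ₂ : ℝ, 0 < γ₁ → γ₁ < γ₂ → w γ₂ t < w γ₁ t) ∧
    (∀ γ : ℝ, 0 < γ → ∀ t : Fin n,
      HasDerivAt (fun s => w s t)
        ((-((γ • Λ⁻¹ + 1)⁻¹ * Λ⁻¹ * (γ • Λ⁻¹ + 1)⁻¹) *ᵥ (1 : Fin n → ℝ)) t) γ ∧
      (-((γ • Λ⁻¹ + 1)⁻¹ * Λ⁻¹ * (γ • Λ⁻¹ + 1)⁻¹) *ᵥ (1 : Fin n → ℝ)) t < 0) :=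
  stmt_13_general n φ hφ0 hφ1 Λ hΛ w hw
end
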